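/- arXiv:1904.12082 — 5 statements merged into one kernel-verified Lean document; each statement's English description precedes it below -/
import Mathlib

section
/- Let A be a symmetric positive definite d×d real matrix with smallest eigenvalue at least κ > 0, and let B be the 2d×2d block matrix B = [[0, -I_d], [A, γI_d]] with γ > 0. Then every eigenvalue μ of B satisfies Re(μ) ≥ δ_γ', where δ_γ' = γ/2 if 0 < γ ≤ 2√κ, and δ_γ' = (γ - √(γ² - 4κ))/2 if γ > 2√κ. -/
/-!
Multiplying `B - μ` on the right by unipotent block matrices turns it into a block lower
triangular matrix, so `det (B - μ) = det (A - λ)` with `λ = γμ - μ²`. Hence `λ` is an eigenvalue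
of `A` acting on `ℂ^d`; as `A - κ` is positive semidefinite, so is its complexification, which
forces `λ` to be real and `λ ≥ κ`. Writing `μ = a + bi`, `Im λ = b (γ - 2a) = 0`: either
`a = γ/2`, or `μ` is a real root of `μ² - γμ + λ`, so `(2a - γ)² = γ² - 4λ ≤ γ² - 4κ`.
-/

open Matrix
open scoped ComplexOrder

namespace Matrix

variable {n : Type*} [Fintype n]

theorem det_fromBlocks_zero_neg_one_sub_smul_one [DecidableEq n] {R : Type*} [CommRing R]
    (A : Matrix n n R) (c μ : R) :
    (fromBlocks 0 (-1) A (c • 1) - μ • 1).det = (A - (c * μ - μ ^ 2) • 1).det := by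
  -- the three unipotent factors multiply to `fromBlocks 0 1 (-1) (-μ • 1)`
  have hprod : (fromBlocks 0 (-1) A (c • 1) - μ • 1) *
      ((fromBlocks 1 1 0 1 : Matrix (n ⊕ n) (n ⊕ n) R) * fromBlocks 1 0 (-1) 1 *
        fromBlocks 1 ((1 + μ) • 1) 0 1) =
      fromBlocks 1 0 ((μ - c) • 1) (A - (c * μ - μ ^ 2) • 1) := by
    rw [← fromBlocks_one, fromBlocks_smul, sub_eq_add_neg, fromBlocks_neg, fromBlocks_add]
    simp only [zero_add, smul_zero, neg_zero, add_zero, fromBlocks_multiply, mul_one, mul_neg,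
      add_neg_cancel, mul_zero, Algebra.mul_smul_comm, smul_neg, neg_neg, neg_mul, one_mul,
      neg_add_rev, fromBlocks_inj, true_and]
    refine ⟨by module, by module, ?_⟩
    simp only [add_mul, mul_add, neg_mul, mul_neg, smul_mul_smul_comm, mul_one]
    module
  simpa [det_fromBlocks_zero₂₁, det_fromBlocks_zero₁₂] using congrArg det hprod

theorem star_dotProduct_map_ofReal_mulVec {S : Matrix n n ℝ} (hS : S.IsSymm) (u : n → ℂ) :
    star u ⬝ᵥ (S.map Complex.ofReal *ᵥ u) =
      ((fun i ↦ (u i).re) ⬝ᵥ S *ᵥ (fun i ↦ (u i).re) +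
        (fun i ↦ (u i).im) ⬝ᵥ S *ᵥ (fun i ↦ (u i).im) : ℝ) := by
  set x : n → ℝ := fun i ↦ (u i).re
  set y : n → ℝ := fun i ↦ (u i).im
  have hu : u = Complex.ofReal ∘ x + Complex.I • Complex.ofReal ∘ y := by
    ext i; simpa [x, y, mul_comm] using (Complex.re_add_im (u i)).symm
  have hstar : star u = Complex.ofReal ∘ x - Complex.I • Complex.ofReal ∘ y := by
    rw [hu]; ext i; simp [sub_eq_add_neg, mul_comm]
  have hmap (v : n → ℝ) :
      S.map Complex.ofReal *ᵥ (Complex.ofReal ∘ v) = Complex.ofReal ∘ (S *ᵥ v) := by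
    ext i; exact (Complex.ofRealHom.map_mulVec S v i).symm
  have hdot (v w : n → ℝ) :
      (Complex.ofReal ∘ v) ⬝ᵥ (Complex.ofReal ∘ w) = ((v ⬝ᵥ w : ℝ) : ℂ) :=
    (Complex.ofRealHom.map_dotProduct v w).symm
  have hsym : x ⬝ᵥ S *ᵥ y = y ⬝ᵥ S *ᵥ x := by
    rw [dotProduct_mulVec, ← mulVec_transpose, dotProduct_comm, hS.eq]
  rw [hstar, hu, mulVec_add, mulVec_smul, hmap, hmap]
  simp only [sub_dotProduct, dotProduct_add, smul_dotProduct, dotProduct_smul, hdot, hsym]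
  push_cast
  linear_combination (-((y ⬝ᵥ S *ᵥ y : ℝ) : ℂ)) * Complex.I_sq

theorem PosSemidef.map_ofReal {S : Matrix n n ℝ} (hS : S.PosSemidef) :
    (S.map Complex.ofReal).PosSemidef := by
  have hsymm : S.IsSymm := by simpa [IsHermitian, IsSymm] using hS.isHermitian
  refine .of_dotProduct_mulVec_nonneg ?_ fun u ↦ ?_
  · ext i j; simp [← hsymm.apply i j]
  · rw [star_dotProduct_map_ofReal_mulVec hsymm, Complex.zero_le_real]
    exact add_nonneg (by simpa using hS.dotProduct_mulVec_nonneg _)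
      (by simpa using hS.dotProduct_mulVec_nonneg _)

theorem PosSemidef.nonneg_of_mulVec_eq_smul {𝕜 : Type*} [RCLike 𝕜] {M : Matrix n n 𝕜}
    (hM : M.PosSemidef) {u : n → 𝕜} {c : 𝕜} (hu : u ≠ 0) (h : M *ᵥ u = c • u) : 0 ≤ c := by
  have hpos : 0 < star u ⬝ᵥ u := dotProduct_star_self_pos_iff.mpr hu
  have hnonneg : 0 * (star u ⬝ᵥ u) ≤ c * (star u ⬝ᵥ u) := by
    simpa [h, dotProduct_smul, mul_comm] using hM.dotProduct_mulVec_nonneg u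
  exact le_of_mul_le_mul_right hnonneg hpos

end Matrix

-- In `ComplexOrder`, `(κ : ℂ) ≤ z` says that `z` is real and at least `κ`.
theorem le_re_of_ofReal_le_mul_sub_sq {κ γ : ℝ} (hκ : 0 ≤ κ) (hγ : 0 ≤ γ) {μ : ℂ}
    (h : (κ : ℂ) ≤ γ * μ - μ ^ 2) :
    (if γ ≤ 2 * √κ then γ / 2 else (γ - √(γ ^ 2 - 4 * κ)) / 2) ≤ μ.re := by
  obtain ⟨hre, him⟩ := Complex.le_def.mp h
  simp only [Complex.ofReal_re, pow_two, Complex.sub_re, Complex.mul_re, Complex.ofReal_im,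
    zero_mul, sub_zero, Complex.sub_im, Complex.mul_im, add_zero] at hre him
  rcases mul_eq_zero.mp (show μ.im * (γ - 2 * μ.re) = 0 by linarith) with hreal | hmid
  · have hdisc : (2 * μ.re - γ) ^ 2 ≤ γ ^ 2 - 4 * κ := by nlinarith
    split_ifs with hγκ
    · have : γ ^ 2 ≤ 4 * κ := by nlinarith [Real.sq_sqrt hκ, Real.sqrt_nonneg κ]
      nlinarith
    · linarith [abs_le.mp (Real.abs_le_sqrt hdisc)]
  · split_ifs <;> linarith [Real.sqrt_nonneg (γ ^ 2 - 4 * κ)]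

/-- Every eigenvalue `μ` of the block matrix `B = [[0, -I],[A, γI]]`, where `A` is
symmetric positive definite with smallest eigenvalue at least `κ > 0` and `γ > 0`,
satisfies `Re μ ≥ δ'_γ` with `δ'_γ = γ/2` for `0 < γ ≤ 2√κ` and
`δ'_γ = (γ - √(γ²-4κ))/2` for `γ > 2√κ`. -/
theorem stmt2 (d : ℕ) (A : Matrix (Fin d) (Fin d) ℝ) (κ γ : ℝ)
    (hκ : 0 < κ) (hγ : 0 < γ)
    (hAsym : A.IsSymm)
    (hA : ∀ v : Fin d → ℝ, κ * (v ⬝ᵥ v) ≤ v ⬝ᵥ (A *ᵥ v))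
    (B : Matrix (Fin d ⊕ Fin d) (Fin d ⊕ Fin d) ℝ)
    (hB : B = Matrix.fromBlocks 0 (-1) A (γ • 1))
    (μ : ℂ)
    (hμ : (B.map (Complex.ofReal) - μ • (1 : Matrix (Fin d ⊕ Fin d) (Fin d ⊕ Fin d) ℂ)).det = 0) :
    (if γ ≤ 2 * Real.sqrt κ then γ / 2 else (γ - Real.sqrt (γ ^ 2 - 4 * κ)) / 2) ≤ μ.re := by
  set lam : ℂ := γ * μ - μ ^ 2
  have hdet : (A.map Complex.ofReal - lam • 1).det = 0 := by
    rw [← det_fromBlocks_zero_neg_one_sub_smul_one, ← hμ, hB, fromBlocks_map]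
    simp [Matrix.map_neg, Matrix.map_smul]
  obtain ⟨u, hu0, hu⟩ := exists_mulVec_eq_zero_iff.mpr hdet
  have hpsd : (A - κ • 1).PosSemidef := by
    refine .of_dotProduct_mulVec_nonneg ?_ fun v ↦ ?_
    · simpa [IsHermitian] using hAsym.eq
    · simpa [sub_mulVec, dotProduct_sub, dotProduct_smul, smul_mulVec] using hA v
  have hshift : (A - κ • 1).map Complex.ofReal *ᵥ u = (lam - κ) • u := by
    rw [sub_mulVec, smul_mulVec, one_mulVec, sub_eq_zero] at hu
    have hmap : (A - κ • 1).map Complex.ofReal = A.map Complex.ofReal - (κ : ℂ) • 1 := by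
      simp [Matrix.map_sub, Matrix.map_smul]
    rw [hmap, sub_mulVec, smul_mulVec, one_mulVec, hu, ← sub_smul]
  exact le_re_of_ofReal_le_mul_sub_sq hκ.le hγ.le
    (sub_nonneg.mp (hpsd.map_ofReal.nonneg_of_mulVec_eq_smul hu0 hshift))
end

section
/- Let A be a symmetric positive definite d×d matrix with orthonormal eigenbasis v_1,...,v_d and eigenvalues λ_1,...,λ_d, and let B = [[0, -I_d], [A, γI_d]]. Define the orthogonal matrix U whose k-th pair of columns is U_k = (1/√2)[[v_k, v_k],[v_k, -v_k]]. Then UᵀBU is block diagonal with 2×2 blocks J_kk = (1/2)[[λ_k+γ-1, λ_k-γ+1], [-λ_k-γ-1, -λ_k+γ+1]]. -/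
/-!
Column `(a, k)` of `U` is `(v k, s a • v k) / √2` with `s = ![1, -1]`, and `B` maps
`(v l, c • v l)` to `(-c • v l, (lam l + γ c) • v l)`. Orthonormality of the `v k` then makes
entry `((a, k), (b, l))` of `Uᵀ B U` equal to `δ_kl (s a (lam l + γ s b) - s b) / 2`, which is
`J_kk a b` in each of the four cases.
-/

open Matrix

section
variable {m n R : Type*} [Fintype m] [Fintype n] [CommRing R]

theorem transpose_mul_mul_apply {k : Type*} (U : Matrix m k R) (B : Matrix m m R) (p q : k) :
    (Uᵀ * B * U) p q = Uᵀ p ⬝ᵥ B *ᵥ Uᵀ q := by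
  rw [Matrix.mul_assoc, mul_apply']
  rfl

theorem fromBlocks_mulVec_sumElim_smul [DecidableEq n] (A : Matrix n n R) (γ c μ : R)
    (x : n → R) (hx : A *ᵥ x = μ • x) :
    fromBlocks 0 (-1) A (γ • 1) *ᵥ Sum.elim x (c • x) = Sum.elim (-c • x) ((μ + γ * c) • x) := by
  rw [fromBlocks_mulVec]
  simp [hx, neg_mulVec, smul_mulVec, add_smul, smul_smul]

theorem sumElim_smul_dotProduct_sumElim_smul (x y : n → R) (a p q : R) :
    Sum.elim x (a • x) ⬝ᵥ Sum.elim (p • y) (q • y) = (p + a * q) * (x ⬝ᵥ y) := by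
  simp only [sumElim_dotProduct_sumElim, dotProduct_smul, smul_dotProduct, smul_eq_mul]
  ring

end

theorem stmt3_general (d : ℕ) (A : Matrix (Fin d) (Fin d) ℝ) (γ : ℝ)
    (v : Fin d → Fin d → ℝ) (lam : Fin d → ℝ)
    (heig : ∀ k, A *ᵥ v k = lam k • v k)
    (horth : ∀ k l, v k ⬝ᵥ v l = if k = l then (1 : ℝ) else 0)
    (B : Matrix (Fin d ⊕ Fin d) (Fin d ⊕ Fin d) ℝ)
    (hB : B = Matrix.fromBlocks 0 (-1) A (γ • 1))
    (U : Matrix (Fin d ⊕ Fin d) (Fin 2 × Fin d) ℝ)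
    (hU1 : ∀ i p, U (Sum.inl i) p = v p.2 i / Real.sqrt 2)
    (hU2 : ∀ (i : Fin d) (p : Fin 2 × Fin d),
      U (Sum.inr i) p = (if p.1 = 0 then v p.2 i else -v p.2 i) / Real.sqrt 2) :
    Uᵀ * B * U = Matrix.blockDiagonal (fun k =>
      (1/2 : ℝ) • !![lam k + γ - 1, lam k - γ + 1;
                     -(lam k) - γ - 1, -(lam k) + γ + 1]) := by
  set s : Fin 2 → ℝ := ![1, -1]
  have hcol : ∀ a k, Uᵀ (a, k) = (√2)⁻¹ • Sum.elim (v k) (s a • v k) := by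
    intro a k
    ext (i | i)
    · simp [hU1, div_eq_inv_mul]
    · fin_cases a <;> simp [hU2, s, div_eq_inv_mul]
  have hsqrt : (√2)⁻¹ * (√2)⁻¹ = (1 / 2 : ℝ) := by
    rw [← mul_inv, Real.mul_self_sqrt zero_le_two, one_div]
  ext ⟨a, k⟩ ⟨b, l⟩
  rw [transpose_mul_mul_apply, hcol, hcol, hB, mulVec_smul,
    fromBlocks_mulVec_sumElim_smul A γ _ (lam l) _ (heig l), smul_dotProduct, dotProduct_smul,
    sumElim_smul_dotProduct_sumElim_smul, horth, blockDiagonal_apply, smul_eq_mul, smul_eq_mul,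
    ← mul_assoc, hsqrt]
  rcases eq_or_ne k l with rfl | hkl
  · fin_cases a <;> fin_cases b <;> simp [s] <;> ring
  · simp [hkl]

/-- Conjugating `B = [[0,-I],[A,γI]]` by the orthogonal matrix `U` built from an
orthonormal eigenbasis of `A` yields a block diagonal matrix whose 2×2 blocks are
`J_kk = (1/2)[[λ_k+γ-1, λ_k-γ+1],[-λ_k-γ-1, -λ_k+γ+1]]`. -/
theorem stmt3 (d : ℕ) (A : Matrix (Fin d) (Fin d) ℝ) (γ : ℝ)
    (v : Fin d → Fin d → ℝ) (lam : Fin d → ℝ)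
    (hA : A.IsSymm) (hpos : A.PosDef)
    (heig : ∀ k, A *ᵥ v k = lam k • v k)
    (horth : ∀ k l, v k ⬝ᵥ v l = if k = l then (1 : ℝ) else 0)
    (B : Matrix (Fin d ⊕ Fin d) (Fin d ⊕ Fin d) ℝ)
    (hB : B = Matrix.fromBlocks 0 (-1) A (γ • 1))
    (U : Matrix (Fin d ⊕ Fin d) (Fin 2 × Fin d) ℝ)
    (hU1 : ∀ i p, U (Sum.inl i) p = v p.2 i / Real.sqrt 2)
    (hU2 : ∀ (i : Fin d) (p : Fin 2 × Fin d),
      U (Sum.inr i) p = (if p.1 = 0 then v p.2 i else -v p.2 i) / Real.sqrt 2) :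
    Uᵀ * B * U = Matrix.blockDiagonal (fun k =>
      (1/2 : ℝ) • !![lam k + γ - 1, lam k - γ + 1;
                     -(lam k) - γ - 1, -(lam k) + γ + 1]) :=
  stmt3_general d A γ v lam heig horth B hB U hU1 hU2
end

section
/- Let J be a 2×2 real matrix satisfying J² - γJ + λI = 0 with 0 < γ < 2√λ, and set ω = √(4λ - γ²)/2. Then exp(-Jt) = e^{-γt/2} ( I cos(ωt) - ((2J - γI)/(2ω)) sin(ωt) ) for all t ≥ 0. -/
open Matrix NormedSpace

/-!
Completing the square, `b = j - (γ/2) • 1` satisfies `b² = -ω² • 1`. Since `(γ/2) • 1` is central,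
`exp (-t j) = e^{-γt/2} exp (-t b)`, and because `(-t b)² = -(ωt)² • 1` the even and odd parts of
the exponential series of `-t b` are the cosine and sine series of `ωt`.
-/

section QuadraticExp

variable {A : Type*} [NormedRing A] [NormedAlgebra ℝ A]

theorem pow_two_mul_of_mul_self_eq_neg_sq_smul_one {a : A} {r : ℝ}
    (h : a * a = (-(r ^ 2)) • 1) (n : ℕ) :
    a ^ (2 * n) = ((-1) ^ n * r ^ (2 * n)) • (1 : A) := by
  rw [pow_mul, sq, h, smul_pow, one_pow, neg_pow, pow_mul]

theorem exp_eq_cos_smul_one_add_of_mul_self_eq_neg_sq_smul_one {a : A} {r : ℝ} (hr : r ≠ 0)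
    (h : a * a = (-(r ^ 2)) • 1) :
    exp a = Real.cos r • (1 : A) + (Real.sin r / r) • a := by
  rw [exp_eq_tsum ℝ]
  refine HasSum.tsum_eq (HasSum.even_add_odd ?_ ?_)
  · convert (Real.hasSum_cos r).smul_const (1 : A) using 2 with n
    rw [pow_two_mul_of_mul_self_eq_neg_sq_smul_one h, smul_smul, div_eq_inv_mul]
  · convert ((Real.hasSum_sin r).div_const r).smul_const a using 2 with n
    rw [pow_succ, pow_two_mul_of_mul_self_eq_neg_sq_smul_one h, smul_mul_assoc, one_mul,
      smul_smul, pow_succ]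
    field_simp

theorem exp_smul_one (c : ℝ) : exp (c • (1 : A)) = Real.exp c • (1 : A) := by
  rw [← Algebra.algebraMap_eq_smul_one, ← Algebra.algebraMap_eq_smul_one, Real.exp_eq_exp_ℝ,
    algebraMap_exp_comm]

variable [CompleteSpace A]

theorem exp_neg_smul_of_mul_self_sub_smul_add_smul_one_eq_zero {j : A} {γ lam ω : ℝ}
    (hj : j * j - γ • j + lam • 1 = 0) (hω0 : ω ≠ 0) (hω : 4 * ω ^ 2 = 4 * lam - γ ^ 2)
    (t : ℝ) :
    exp (-(t • j)) = Real.exp (-(γ * t / 2)) •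
      (Real.cos (ω * t) • (1 : A) - (Real.sin (ω * t) / (2 * ω)) • ((2 : ℝ) • j - γ • 1)) := by
  rcases eq_or_ne t 0 with rfl | ht
  · simp
  set b := j - (γ / 2) • (1 : A)
  have hb : ((-t) • b) * ((-t) • b) = (-((ω * t) ^ 2)) • (1 : A) := by
    have hjj : j * j = γ • j - lam • 1 := by rwa [sub_add, sub_eq_zero] at hj
    simp only [b, sub_mul, mul_sub, smul_mul_assoc, mul_smul_comm, mul_one, one_mul, smul_smul,
      hjj]
    match_scalars
    · ring
    · linear_combination (t ^ 2 / 4) * hω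
  let +nondep : NormedAlgebra ℚ A := .restrictScalars ℚ ℝ A
  have hsplit : -(t • j) = (-(γ * t / 2)) • (1 : A) + (-t) • b := by module
  rw [hsplit, NormedSpace.exp_add_of_commute ((Commute.one_left _).smul_left _),
    exp_smul_one, exp_eq_cos_smul_one_add_of_mul_self_eq_neg_sq_smul_one (by positivity) hb,
    smul_mul_assoc, one_mul]
  congr 1
  match_scalars
  · field_simp
    ring
  · field_simp

end QuadraticExp

theorem stmt6_general (lam γ : ℝ) (hγ0 : 0 < γ) (hγ : γ < 2 * Real.sqrt lam)
    (J : Matrix (Fin 2) (Fin 2) ℝ)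
    (hJ : J * J - γ • J + lam • (1 : Matrix (Fin 2) (Fin 2) ℝ) = 0)
    (ω : ℝ) (hω : ω = Real.sqrt (4 * lam - γ ^ 2) / 2)
    (t : ℝ) :
    NormedSpace.exp (-(t • J)) =
      Real.exp (-(γ * t / 2)) •
        (Real.cos (ω * t) • (1 : Matrix (Fin 2) (Fin 2) ℝ) -
          (Real.sin (ω * t) / (2 * ω)) •
            ((2 : ℝ) • J - γ • (1 : Matrix (Fin 2) (Fin 2) ℝ))) := by
  have hdisc : 0 < 4 * lam - γ ^ 2 := by
    linarith [(Real.lt_sqrt (by positivity)).mp (show γ / 2 < √lam by linarith)]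
  -- Any submultiplicative norm will do: `exp` depends only on the topology.
  let : NormedRing (Matrix (Fin 2) (Fin 2) ℝ) := Matrix.linftyOpNormedRing
  let : NormedAlgebra ℝ (Matrix (Fin 2) (Fin 2) ℝ) := Matrix.linftyOpNormedAlgebra
  refine exp_neg_smul_of_mul_self_sub_smul_add_smul_one_eq_zero hJ ?_ ?_ t
  · rw [hω]
    exact (half_pos (Real.sqrt_pos.mpr hdisc)).ne'
  · rw [hω, div_pow, Real.sq_sqrt hdisc.le]
    ring

/-- Underdamped case: if `J² - γJ + λI = 0` with `0 < γ < 2√λ` and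
`ω = √(4λ - γ²)/2`, then
`exp(-Jt) = e^{-γt/2} (I cos(ωt) - ((2J - γI)/(2ω)) sin(ωt))`. -/
theorem stmt6 (lam γ : ℝ) (hγ0 : 0 < γ) (hγ : γ < 2 * Real.sqrt lam)
    (J : Matrix (Fin 2) (Fin 2) ℝ)
    (hJ : J * J - γ • J + lam • (1 : Matrix (Fin 2) (Fin 2) ℝ) = 0)
    (ω : ℝ) (hω : ω = Real.sqrt (4 * lam - γ ^ 2) / 2)
    (t : ℝ) (ht : 0 ≤ t) :
    NormedSpace.exp (-(t • J)) =
      Real.exp (-(γ * t / 2)) •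
        (Real.cos (ω * t) • (1 : Matrix (Fin 2) (Fin 2) ℝ) -
          (Real.sin (ω * t) / (2 * ω)) •
            ((2 : ℝ) • J - γ • (1 : Matrix (Fin 2) (Fin 2) ℝ))) :=
  stmt6_general lam γ hγ0 hγ J hJ ω hω t
end

section
/- For a smooth (or C¹) one-parameter family of square matrices X(t), the derivative of the matrix exponential satisfies d/dt e^{X(t)} = ∫₀¹ e^{βX(t)} X'(t) e^{(1-β)X(t)} dβ. -/
/-!
Duhamel's formula `e^A - e^B = ∫₀¹ e^{βA} (A - B) e^{(1-β)B} dβ` is the fundamental theorem of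
calculus for `β ↦ e^{βA} e^{(1-β)B}`. With `A = X s`, `B = X t` and divided by `s - t`, it writes
the difference quotient of `e^X` at `t` as a continuous function of `X s` and of the difference
quotient of `X`, so it converges to the integral as `s → t`.
-/

open Matrix MeasureTheory NormedSpace Filter Topology

attribute [local instance] Matrix.normedAddCommGroup Matrix.normedSpace

section BanachAlgebra

variable {𝔸 : Type*} [NormedRing 𝔸] [NormedAlgebra ℝ 𝔸] [CompleteSpace 𝔸]

theorem hasDerivAt_exp_smul_mul_exp_one_sub_smul (A B : 𝔸) (β : ℝ) :
    HasDerivAt (fun u : ℝ => exp (u • A) * exp ((1 - u) • B))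
      (exp (β • A) * (A - B) * exp ((1 - β) • B)) β := by
  have hB : HasDerivAt (fun u : ℝ => exp ((1 - u) • B)) (-(B * exp ((1 - β) • B))) β := by
    simpa [Function.comp_def] using
      (hasDerivAt_exp_smul_const' B (1 - β)).scomp β ((hasDerivAt_id β).const_sub 1)
  refine ((hasDerivAt_exp_smul_const A β).mul hB).congr_deriv ?_
  noncomm_ring

end BanachAlgebra

namespace Matrix

variable {m : Type*} [Fintype m] [DecidableEq m]

/- The entrywise sup norm used for matrices is not submultiplicative; Banach-algebra facts are
applied with the `L∞` operator norm, which induces the same topology. -/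
theorem continuous_exp : Continuous (exp : Matrix m m ℝ → Matrix m m ℝ) :=
  open scoped Norms.Operator in exp_continuous

theorem hasDerivAt_exp_smul_mul_exp_one_sub_smul (A B : Matrix m m ℝ) (β : ℝ) :
    HasDerivAt (fun u : ℝ => exp (u • A) * exp ((1 - u) • B))
      (exp (β • A) * (A - B) * exp ((1 - β) • B)) β :=
  open scoped Norms.Operator in _root_.hasDerivAt_exp_smul_mul_exp_one_sub_smul A B β

theorem exp_sub_exp_eq_intervalIntegral (A B : Matrix m m ℝ) :
    exp A - exp B = ∫ β in (0 : ℝ)..1, exp (β • A) * (A - B) * exp ((1 - β) • B) := by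
  have hcont : Continuous fun β : ℝ => exp (β • A) * (A - B) * exp ((1 - β) • B) := by
    have := continuous_exp (m := m)
    fun_prop
  rw [intervalIntegral.integral_eq_sub_of_hasDerivAt
    (fun β _ => hasDerivAt_exp_smul_mul_exp_one_sub_smul A B β) (hcont.intervalIntegrable 0 1)]
  simp

theorem continuous_intervalIntegral_exp_smul_mul_mul_exp (Z : Matrix m m ℝ) :
    Continuous fun p : Matrix m m ℝ × Matrix m m ℝ =>
      ∫ β in (0 : ℝ)..1, exp (β • p.1) * p.2 * exp ((1 - β) • Z) := by
  have := continuous_exp (m := m)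
  exact intervalIntegral.continuous_parametric_intervalIntegral_of_continuous' (by fun_prop) 0 1

theorem slope_exp_comp_eq_intervalIntegral (X : ℝ → Matrix m m ℝ) (t s : ℝ) :
    slope (fun s => exp (X s)) t s =
      ∫ β in (0 : ℝ)..1, exp (β • X s) * slope X t s * exp ((1 - β) • X t) := by
  simp only [slope_def_module, exp_sub_exp_eq_intervalIntegral, mul_smul_comm, smul_mul_assoc,
    intervalIntegral.integral_smul]

end Matrix

theorem HasDerivAt.matrix_exp {m : Type*} [Fintype m] [DecidableEq m] {X : ℝ → Matrix m m ℝ}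
    {X' : Matrix m m ℝ} {t : ℝ} (hX : HasDerivAt X X' t) :
    HasDerivAt (fun s => NormedSpace.exp (X s))
      (∫ β in (0 : ℝ)..1,
        NormedSpace.exp (β • X t) * X' * NormedSpace.exp ((1 - β) • X t)) t := by
  refine hasDerivAt_iff_tendsto_slope.mpr ?_
  have hpair : Tendsto (fun s => (X s, slope X t s)) (𝓝[≠] t) (𝓝 (X t, X')) :=
    (hX.continuousAt.tendsto.mono_left nhdsWithin_le_nhds).prodMk_nhds
      (hasDerivAt_iff_tendsto_slope.mp hX)
  exact ((Matrix.continuous_intervalIntegral_exp_smul_mul_mul_exp (X t)).tendsto _ |>.comp hpair)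
    |>.congr fun s => (Matrix.slope_exp_comp_eq_intervalIntegral X t s).symm

theorem stmt9_general (n : ℕ) (X X' : ℝ → Matrix (Fin n) (Fin n) ℝ)
    (hX : ∀ t, HasDerivAt X (X' t) t) (t : ℝ) :
    HasDerivAt (fun s => NormedSpace.exp (X s))
      (∫ β in (0:ℝ)..1,
        NormedSpace.exp (β • X t) * X' t * NormedSpace.exp ((1 - β) • X t)) t :=
  (hX t).matrix_exp

/-- Derivative of the matrix exponential along a C¹ path:
`d/dt e^{X(t)} = ∫₀¹ e^{βX(t)} X'(t) e^{(1-β)X(t)} dβ`. -/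
theorem stmt9 (n : ℕ) (X X' : ℝ → Matrix (Fin n) (Fin n) ℝ)
    (hX : ∀ t, HasDerivAt X (X' t) t) (hX' : Continuous X') (t : ℝ) :
    HasDerivAt (fun s => NormedSpace.exp (X s))
      (∫ β in (0:ℝ)..1,
        NormedSpace.exp (β • X t) * X' t * NormedSpace.exp ((1 - β) • X t)) t :=
  stmt9_general n X X' hX t
end

section
/- Let B : ℝ^d → ℝ^{n×n} be differentiable in a parameter r_k with ‖∂B/∂r_k‖₂ ≤ M, and suppose ‖exp(-βBs)‖₂ ≤ C e^{-βδs} for all β ∈ [0,1], s ≥ 0. Then ‖∂/∂r_k exp(-B(r)s)‖₂ ≤ C² M s e^{-δs} for all s ≥ 0. -/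
open Matrix

attribute [local instance] Matrix.normedAddCommGroup Matrix.normedSpace

/-- The operator 2-norm of a square real matrix. -/
noncomputable def opNorm {n : ℕ} (M : Matrix (Fin n) (Fin n) ℝ) : ℝ :=
  ‖Matrix.toEuclideanCLM (𝕜 := ℝ) M‖

/-! Duhamel's formula: `t ↦ exp(-(s - t) b) exp(-t a)` runs from `exp(-s b)` to `exp(-s a)` on
`[0, s]` with derivative `exp(-(s - t) b) (b - a) exp(-t a)`, whose norm is at most
`C² e^{-δ s} ‖b - a‖` by the decay hypothesis. Hence `‖exp(-s a) - exp(-s b)‖ ≤ C² s e^{-δ s} ‖a - b‖`,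
and dividing by `|r' - r|` for `a = B(r')`, `b = B(r)` and letting `r' → r` bounds the derivative.
The hypothesis for all `β ∈ [0, 1]` is exactly the decay bound for all times `t = β s ∈ [0, s]`.
The argument runs in the Banach algebra of operators on Euclidean space, where `opNorm` is the
norm, and is transported there by `toEuclideanCLM`. -/

open NormedSpace

theorem HasDerivAt.norm_le_mul_of_norm_sub_le {𝕜 E F : Type*} [NontriviallyNormedField 𝕜]
    [NormedAddCommGroup E] [NormedSpace 𝕜 E] [NormedAddCommGroup F] [NormedSpace 𝕜 F]
    {f : 𝕜 → E} {g : 𝕜 → F} {f' : E} {g' : F} {r : 𝕜} {K : ℝ}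
    (hf : HasDerivAt f f' r) (hg : HasDerivAt g g' r)
    (hfg : ∀ᶠ y in nhds r, ‖f y - f r‖ ≤ K * ‖g y - g r‖) :
    ‖f'‖ ≤ K * ‖g'‖ := by
  have hf' := (hasDerivAt_iff_tendsto_slope.mp hf).norm
  have hg' := ((hasDerivAt_iff_tendsto_slope.mp hg).norm).const_mul K
  refine le_of_tendsto_of_tendsto hf' hg' ?_
  filter_upwards [nhdsWithin_le_nhds hfg] with y hy
  rw [slope_def_module, slope_def_module, norm_smul, norm_smul, mul_left_comm]
  exact mul_le_mul_of_nonneg_left hy (norm_nonneg _)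

section BanachAlgebra

variable {A : Type*} [NormedRing A] [NormedAlgebra ℝ A] [CompleteSpace A]

theorem hasDerivAt_exp_sub_smul_mul_exp_smul_neg (a b : A) (s t : ℝ) :
    HasDerivAt (fun u : ℝ => exp ((u - s) • b) * exp (u • -a))
      (exp ((t - s) • b) * (b - a) * exp (t • -a)) t := by
  have hb : HasDerivAt (fun u : ℝ => exp ((u - s) • b)) (exp ((t - s) • b) * b) t := by
    simpa only [Function.comp_def, id, one_smul] using
      (hasDerivAt_exp_smul_const b (t - s)).scomp t ((hasDerivAt_id t).sub_const s)
  refine (hb.mul (hasDerivAt_exp_smul_const' (-a) t)).congr_deriv ?_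
  noncomm_ring

theorem norm_exp_neg_smul_sub_exp_neg_smul_le (a b : A) {s C δ : ℝ} (hs : 0 ≤ s)
    (ha : ∀ t ∈ Set.Icc 0 s, ‖exp (-(t • a))‖ ≤ C * Real.exp (-(δ * t)))
    (hb : ∀ t ∈ Set.Icc 0 s, ‖exp (-(t • b))‖ ≤ C * Real.exp (-(δ * t))) :
    ‖exp (-(s • a)) - exp (-(s • b))‖ ≤ C ^ 2 * s * Real.exp (-(δ * s)) * ‖a - b‖ := by
  have hderiv_le : ∀ t ∈ Set.Icc 0 s,
      ‖exp ((t - s) • b) * (b - a) * exp (t • -a)‖ ≤ C ^ 2 * Real.exp (-(δ * s)) * ‖a - b‖ := by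
    rintro t ⟨ht0, hts⟩
    have hb' := hb (s - t) ⟨sub_nonneg.mpr hts, by linarith⟩
    have ha' := ha t ⟨ht0, hts⟩
    rw [← neg_sub, neg_smul, smul_neg]
    calc ‖exp (-((s - t) • b)) * (b - a) * exp (-(t • a))‖
        ≤ ‖exp (-((s - t) • b))‖ * ‖b - a‖ * ‖exp (-(t • a))‖ := norm_mul₃_le
      _ ≤ C * Real.exp (-(δ * (s - t))) * ‖b - a‖ * (C * Real.exp (-(δ * t))) := by
        have := (norm_nonneg _).trans hb'
        gcongr
      _ = C ^ 2 * (Real.exp (-(δ * (s - t))) * Real.exp (-(δ * t))) * ‖a - b‖ := by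
        rw [norm_sub_rev]; ring
      _ = C ^ 2 * Real.exp (-(δ * s)) * ‖a - b‖ := by
        rw [← Real.exp_add]; ring_nf
  have := norm_image_sub_le_of_norm_deriv_le_segment'
    (fun t _ => (hasDerivAt_exp_sub_smul_mul_exp_smul_neg a b s t).hasDerivWithinAt)
    (fun t ht => hderiv_le t (Set.mem_Icc_of_Ico ht)) s (Set.right_mem_Icc.mpr hs)
  simp only [sub_self, sub_zero, zero_sub, zero_smul, neg_zero, exp_zero, one_mul, mul_one,
    neg_smul, smul_neg] at this
  linarith

theorem norm_le_of_hasDerivAt_exp_neg_smul {b : ℝ → A} {b' e : A} {r s C δ : ℝ} (hs : 0 ≤ s)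
    (hb : HasDerivAt b b' r)
    (hexp : ∀ y, ∀ t ∈ Set.Icc 0 s, ‖exp (-(t • b y))‖ ≤ C * Real.exp (-(δ * t)))
    (he : HasDerivAt (fun y => exp (-(s • b y))) e r) :
    ‖e‖ ≤ C ^ 2 * s * Real.exp (-(δ * s)) * ‖b'‖ :=
  he.norm_le_mul_of_norm_sub_le hb <| Filter.Eventually.of_forall fun y =>
    norm_exp_neg_smul_sub_exp_neg_smul_le (b y) (b r) hs (hexp y) (hexp r)

end BanachAlgebra

section EuclideanCLM

variable {𝕜 ι : Type*} [RCLike 𝕜] [Fintype ι] [DecidableEq ι]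

theorem Matrix.toEuclideanCLM_exp (X : Matrix ι ι 𝕜) :
    toEuclideanCLM (𝕜 := 𝕜) (exp X) = exp (toEuclideanCLM (𝕜 := 𝕜) X) := by
  set φ := toEuclideanCLM (𝕜 := 𝕜) (n := ι)
  have hφ : Continuous φ.symm :=
    LinearMap.continuous_of_finiteDimensional φ.symm.toAlgEquiv.toLinearMap
  have h := (exp_series_hasSum_exp' (𝕂 := 𝕜) (φ X)).map φ.symm hφ
  simp only [Function.comp_def, map_smul, map_pow, StarAlgEquiv.symm_apply_apply] at h
  rw [congrFun (exp_eq_tsum 𝕜) X, h.tsum_eq, StarAlgEquiv.apply_symm_apply]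

theorem HasDerivAt.toEuclideanCLM {f : 𝕜 → Matrix ι ι 𝕜} {f' : Matrix ι ι 𝕜} {r : 𝕜}
    (hf : HasDerivAt f f' r) :
    HasDerivAt (fun y => Matrix.toEuclideanCLM (𝕜 := 𝕜) (f y)) (Matrix.toEuclideanCLM (𝕜 := 𝕜) f')
      r :=
  (LinearMap.toContinuousLinearMap
    (Matrix.toEuclideanCLM (𝕜 := 𝕜) (n := ι)).toAlgEquiv.toLinearMap).hasFDerivAt.comp_hasDerivAt
    r hf

end EuclideanCLM

theorem stmt10_general (n : ℕ) (B B' : ℝ → Matrix (Fin n) (Fin n) ℝ) (C M δ : ℝ)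
    (hB : ∀ r, HasDerivAt B (B' r) r)
    (hB' : ∀ r, opNorm (B' r) ≤ M)
    (hexp : ∀ r : ℝ, ∀ β ∈ Set.Icc (0:ℝ) 1, ∀ s ≥ (0:ℝ),
      opNorm (NormedSpace.exp (-((β * s) • B r))) ≤ C * Real.exp (-(β * δ * s)))
    (r s : ℝ) (hs : 0 ≤ s) (E : Matrix (Fin n) (Fin n) ℝ)
    (hE : HasDerivAt (fun r => NormedSpace.exp (-(s • B r))) E r) :
    opNorm E ≤ C ^ 2 * M * s * Real.exp (-(δ * s)) := by
  set φ := toEuclideanCLM (𝕜 := ℝ) (n := Fin n)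
  have hφexp : ∀ (t : ℝ) X, φ (exp (-(t • X))) = exp (-(t • φ X)) := fun t X => by
    rw [toEuclideanCLM_exp, map_neg, map_smul]
  have hdecay : ∀ y, ∀ t ∈ Set.Icc 0 s, ‖exp (-(t • φ (B y)))‖ ≤ C * Real.exp (-(δ * t)) := by
    rintro y t ⟨ht0, hts⟩
    have htime : t / s * s = t := div_mul_cancel_of_imp fun h => by linarith
    have hrate : t / s * δ * s = δ * t := by rw [mul_right_comm, htime, mul_comm]
    have := hexp y (t / s) ⟨div_nonneg ht0 hs, div_le_one_of_le₀ hts hs⟩ s hs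
    rw [htime, hrate] at this
    rwa [← hφexp]
  have hE' : HasDerivAt (fun y => exp (-(s • φ (B y)))) (φ E) r := by
    simpa only [toEuclideanCLM_exp, map_neg, map_smul] using hE.toEuclideanCLM
  calc opNorm E ≤ C ^ 2 * s * Real.exp (-(δ * s)) * ‖φ (B' r)‖ :=
        norm_le_of_hasDerivAt_exp_neg_smul hs (hB r).toEuclideanCLM hdecay hE'
    _ ≤ C ^ 2 * s * Real.exp (-(δ * s)) * M := by gcongr; exact hB' r
    _ = C ^ 2 * M * s * Real.exp (-(δ * s)) := by ring

/-- If `B(r)` is differentiable with `‖∂B/∂r‖₂ ≤ M` and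
`‖exp(-βB(r)s)‖₂ ≤ C e^{-βδs}` for all `β ∈ [0,1]`, `s ≥ 0`, then
`‖∂/∂r exp(-B(r)s)‖₂ ≤ C² M s e^{-δs}`. -/
theorem stmt10 (n : ℕ) (B B' : ℝ → Matrix (Fin n) (Fin n) ℝ) (C M δ : ℝ)
    (hC : 0 < C) (hM : 0 < M) (hδ : 0 < δ)
    (hB : ∀ r, HasDerivAt B (B' r) r)
    (hB' : ∀ r, opNorm (B' r) ≤ M)
    (hexp : ∀ r : ℝ, ∀ β ∈ Set.Icc (0:ℝ) 1, ∀ s ≥ (0:ℝ),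
      opNorm (NormedSpace.exp (-((β * s) • B r))) ≤ C * Real.exp (-(β * δ * s)))
    (r s : ℝ) (hs : 0 ≤ s) (E : Matrix (Fin n) (Fin n) ℝ)
    (hE : HasDerivAt (fun r => NormedSpace.exp (-(s • B r))) E r) :
    opNorm E ≤ C ^ 2 * M * s * Real.exp (-(δ * s)) :=
  stmt10_general n B B' C M δ hB hB' hexp r s hs E hE
end
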